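/- arXiv:1711.06952 — 5 statements merged into one kernel-verified Lean document; each statement's English description precedes it below -/
import Mathlib

section
/- Fix α with 1 < α < √2, a constant c > 0, and 0 < r < 1. Let u, v, w ∈ ℝ^d with z the orthogonal projection of w onto the line through u and v, and suppose z lies on the segment [u,v], |w − z| ≥ r, and |u − z| ≤ |u − v| ≤ c r^{1/α}. Then |u − w| ≥ |u − z| + (3 max(c,1))^{-1} r^α and |w − v| ≥ |z − v| + (3 max(c,1))^{-1} r^α; consequently |u−w| + |w−v| ≥ |u−v| + 2(3 max(c,1))^{-1} r^α. -/
/-! Write `δ = (3 max(c,1))⁻¹ r^α`. By Pythagoras `|u - w|² = |u - z|² + |w - z|²`, so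
`|u - z| + δ ≤ |u - w|` as soon as `2δ|u - z| + δ² ≤ |w - z|²`. Since
`|u - z| ≤ |u - v| ≤ c r^{1/α}` and `|w - z| ≥ r`, it suffices that
`(2/3) r^{α + 1/α} + (1/9) r^{2α} ≤ r²`, which holds for `r ≤ 1` because both exponents
are at least `2`. The same argument works at `v`, and the last inequality follows by adding the
two and using the triangle inequality through `z`. -/

open Set
open scoped RealInnerProductSpace

namespace Real

lemma rpow_mul_rpow_one_div_le_sq {α r : ℝ} (hα : 0 < α) (hr0 : 0 < r) (hr1 : r ≤ 1) :
    r ^ α * r ^ (1 / α) ≤ r ^ 2 := by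
  have two_le : (2 : ℝ) ≤ α + 1 / α := by
    have : α + 1 / α - 2 = (α - 1) ^ 2 / α := by field_simp; ring
    linarith [show 0 ≤ (α - 1) ^ 2 / α by positivity]
  rw [← rpow_add hr0, ← rpow_two]
  exact rpow_le_rpow_of_exponent_ge hr0 hr1 two_le

lemma two_mul_mul_add_sq_le_sq {α c r L : ℝ} (hα : 1 ≤ α) (hr0 : 0 < r) (hr1 : r ≤ 1)
    (hL : L ≤ c * r ^ (1 / α)) :
    2 * ((3 * max c 1)⁻¹ * r ^ α) * L + ((3 * max c 1)⁻¹ * r ^ α) ^ 2 ≤ r ^ 2 := by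
  set k := (3 * max c 1)⁻¹
  have hk : k ≤ 1 / 3 := by
    rw [one_div]; exact inv_anti₀ (by norm_num) (by linarith [le_max_right c 1])
  have hck : c * k ≤ 1 / 3 := by
    calc c * k ≤ max c 1 * k := by gcongr; exact le_max_left c 1
      _ = 1 / 3 := by simp only [k]; field_simp
  have hrα : r ^ α ≤ r := rpow_le_self_of_le_one hr0.le hr1 hα
  have hrα0 : 0 ≤ r ^ α := by positivity
  calc 2 * (k * r ^ α) * L + (k * r ^ α) ^ 2
      ≤ 2 * (k * r ^ α) * (c * r ^ (1 / α)) + (k * r ^ α) ^ 2 := by gcongr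
    _ = 2 * (c * k) * (r ^ α * r ^ (1 / α)) + k ^ 2 * (r ^ α) ^ 2 := by ring
    _ ≤ 2 * (1 / 3) * r ^ 2 + (1 / 3) ^ 2 * r ^ 2 := by
        gcongr
        exact rpow_mul_rpow_one_div_le_sq (by linarith) hr0 hr1
    _ ≤ r ^ 2 := by nlinarith [sq_nonneg r]

end Real

section InnerProductSpace

variable {E : Type*} [NormedAddCommGroup E] [InnerProductSpace ℝ E]

lemma add_le_norm_add_of_inner_eq_zero {x y : E} {δ : ℝ} (hxy : ⟪x, y⟫ = 0) (hδ : 0 ≤ δ)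
    (h : 2 * δ * ‖x‖ + δ ^ 2 ≤ ‖y‖ ^ 2) : ‖x‖ + δ ≤ ‖x + y‖ := by
  have pythagoras := norm_add_sq_eq_norm_sq_add_norm_sq_real hxy
  refine (pow_le_pow_iff_left₀ (by positivity) (norm_nonneg _) two_ne_zero).mp ?_
  nlinarith

lemma add_le_norm_sub_of_mem_segment_of_inner_eq_zero {u v w z : E} {δ : ℝ}
    (hzseg : z ∈ segment ℝ u v) (horth : ⟪w - z, v - u⟫ = 0) (hδ : 0 ≤ δ)
    (h : 2 * δ * ‖u - v‖ + δ ^ 2 ≤ ‖w - z‖ ^ 2) : ‖u - z‖ + δ ≤ ‖u - w‖ := by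
  obtain ⟨t, -, hz⟩ : z ∈ (fun θ : ℝ ↦ u + θ • (v - u)) '' Icc 0 1 :=
    segment_eq_image' ℝ u v ▸ hzseg
  dsimp only at hz
  have huz : ‖u - z‖ ≤ ‖u - v‖ := by
    simpa only [dist_eq_norm] using
      (le_add_of_nonneg_right dist_nonneg).trans_eq (dist_add_dist_of_mem_segment hzseg)
  have hinner : ⟪u - z, z - w⟫ = 0 := by
    rw [show u - z = -(t • (v - u)) by rw [← hz, sub_add_cancel_left], inner_neg_left,
      real_inner_smul_left, ← neg_sub w z, inner_neg_right, real_inner_comm, horth]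
    simp
  have key := add_le_norm_add_of_inner_eq_zero hinner hδ (by
    rw [norm_sub_rev z w]; nlinarith [norm_nonneg (u - z)])
  rwa [sub_add_sub_cancel] at key

end InnerProductSpace

theorem stmt6_general {d : ℕ} (α c r : ℝ) (hα : 1 < α)
    (hr0 : 0 < r) (hr1 : r < 1)
    (u v w z : EuclideanSpace ℝ (Fin d))
    -- `z` lies on the segment `[u, v]` and is the orthogonal projection of `w`
    -- onto the line through `u` and `v`:
    (hzseg : z ∈ segment ℝ u v) (horth : ⟪w - z, v - u⟫ = 0)
    (hwz : r ≤ ‖w - z‖) (huv : ‖u - v‖ ≤ c * r ^ (1 / α)) :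
    ‖u - z‖ + (3 * max c 1)⁻¹ * r ^ α ≤ ‖u - w‖ ∧
    ‖z - v‖ + (3 * max c 1)⁻¹ * r ^ α ≤ ‖w - v‖ ∧
    ‖u - v‖ + 2 * (3 * max c 1)⁻¹ * r ^ α ≤ ‖u - w‖ + ‖w - v‖ := by
  set δ := (3 * max c 1)⁻¹ * r ^ α
  have hδ : 0 ≤ δ := by positivity
  have hgap : 2 * δ * ‖u - v‖ + δ ^ 2 ≤ ‖w - z‖ ^ 2 :=
    (Real.two_mul_mul_add_sq_le_sq hα.le hr0 hr1.le huv).trans (by gcongr)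
  have at_u := add_le_norm_sub_of_mem_segment_of_inner_eq_zero hzseg horth hδ hgap
  have at_v := add_le_norm_sub_of_mem_segment_of_inner_eq_zero (w := w)
    (segment_symm ℝ u v ▸ hzseg) (by rw [← neg_sub v u, inner_neg_right, horth, neg_zero]) hδ
    (by rwa [norm_sub_rev])
  rw [norm_sub_rev v z, norm_sub_rev v w] at at_v
  refine ⟨at_u, at_v, ?_⟩
  linarith [norm_sub_le_norm_sub_add_norm_sub u z v]

theorem stmt6 {d : ℕ} (α c r : ℝ) (hα : 1 < α) (hα2 : α ^ 2 < 2) (hc : 0 < c)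
    (hr0 : 0 < r) (hr1 : r < 1)
    (u v w z : EuclideanSpace ℝ (Fin d))
    -- `z` lies on the segment `[u, v]` and is the orthogonal projection of `w`
    -- onto the line through `u` and `v`:
    (hzseg : z ∈ segment ℝ u v) (horth : ⟪w - z, v - u⟫ = 0)
    (hwz : r ≤ ‖w - z‖) (huz : ‖u - z‖ ≤ ‖u - v‖) (huv : ‖u - v‖ ≤ c * r ^ (1 / α))
    (h1 : ‖u - w‖ < 1) (h2 : ‖v - w‖ < 1) (h3 : ‖u - v‖ < 1) :
    ‖u - z‖ + (3 * max c 1)⁻¹ * r ^ α ≤ ‖u - w‖ ∧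
    ‖z - v‖ + (3 * max c 1)⁻¹ * r ^ α ≤ ‖w - v‖ ∧
    ‖u - v‖ + 2 * (3 * max c 1)⁻¹ * r ^ α ≤ ‖u - w‖ + ‖w - v‖ :=
  stmt6_general α c r hα hr0 hr1 u v w z hzseg horth hwz huv
end

section
/- Let h : D → ℝ be continuous with 0 < m₁ ≤ h(x) ≤ m₂, and set f(x,v) = h(x)|v|. Then f satisfies the Pythagoras α-condition for every α > 1: there is a constant C = C(α, m₁, c) such that for any x ∈ D and points u, v, w with |u−w|, |v−w|, |u−v| < η < 1, dist(w, line(u,v)) ≥ r, and |u−v| ≤ c r^{1/α} for some 0 < r < 1, one has f(x, w−u) + f(x, v−w) ≥ f(x, v−u) + C r^α. -/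
/-!
Write `a = |w - u|`, `b = |w - v|`, `L = |v - u|`. The point `z` of the segment dividing it in
the ratio `a : b` satisfies `(a + b)² |w - z|² = a b ((a + b)² - L²)`, and `|w - z| ≥ r`,
`ab ≤ (a + b)² / 4` give `(a + b)² ≥ L² + 4 r²`. Hence `a + b - L ≥ 4 r² / (a + b + L)`. If
`a + b ≥ 2L` the excess is at least `(a + b) / 2 ≥ r ≥ r^α`; otherwise it is at least
`4 r² / (3L) ≥ 4 r^(2 - 1/α) / (3c) ≥ 4 r^α / (3c)`, using `L ≤ c r^(1/α)` and `α + 1/α ≥ 2`.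
Multiplying by `h x ≥ m₁` gives the claim with `C = m₁ / (3 max(c, 1))`.
-/

open Metric

section InnerProductSpace

variable {E : Type*} [NormedAddCommGroup E] [InnerProductSpace ℝ E]

theorem norm_smul_sub_add_smul_sub_sq (u v w : E) :
    ‖‖w - v‖ • (w - u) + ‖w - u‖ • (w - v)‖ ^ 2 =
      ‖w - u‖ * ‖w - v‖ * ((‖w - u‖ + ‖w - v‖) ^ 2 - ‖v - u‖ ^ 2) := by
  have hvu : ‖v - u‖ ^ 2 = ‖w - u‖ ^ 2 - 2 * inner ℝ (w - u) (w - v) + ‖w - v‖ ^ 2 := by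
    rw [← norm_sub_sq_real, sub_sub_sub_cancel_left]
  rw [hvu, norm_add_sq_real, norm_smul, norm_smul, real_inner_smul_left, real_inner_smul_right,
    norm_norm, norm_norm]
  ring

theorem mul_infDist_segment_le (u v w : E) (hpos : 0 < ‖w - u‖ + ‖w - v‖) :
    (‖w - u‖ + ‖w - v‖) * infDist w (segment ℝ u v) ≤
      ‖‖w - v‖ • (w - u) + ‖w - u‖ • (w - v)‖ := by
  set a := ‖w - u‖
  set b := ‖w - v‖
  have hmem : (b / (a + b)) • u + (a / (a + b)) • v ∈ segment ℝ u v :=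
    ⟨_, _, by positivity, by positivity, by rw [← add_div, add_comm, div_self hpos.ne'], rfl⟩
  have hsub : w - ((b / (a + b)) • u + (a / (a + b)) • v) =
      (a + b)⁻¹ • (b • (w - u) + a • (w - v)) := by
    have : w = (a + b)⁻¹ • (a + b) • w := by rw [inv_smul_smul₀ hpos.ne']
    nth_rewrite 1 [this]
    simp only [div_eq_inv_mul, mul_smul, smul_add, smul_sub, add_smul]
    abel
  calc (a + b) * infDist w (segment ℝ u v)
      ≤ (a + b) * ‖(a + b)⁻¹ • (b • (w - u) + a • (w - v))‖ := by
        rw [← hsub, ← dist_eq_norm]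
        exact mul_le_mul_of_nonneg_left (infDist_le_dist_of_mem hmem) hpos.le
    _ = ‖b • (w - u) + a • (w - v)‖ := by
        rw [norm_smul, norm_inv, Real.norm_of_nonneg hpos.le, mul_inv_cancel_left₀ hpos.ne']

theorem sq_norm_sub_add_four_mul_sq_le {u v w : E} {r : ℝ} (hr : 0 < r)
    (hrw : r ≤ infDist w (segment ℝ u v)) :
    ‖v - u‖ ^ 2 + 4 * r ^ 2 ≤ (‖w - u‖ + ‖w - v‖) ^ 2 := by
  have hru : r ≤ ‖w - u‖ := by
    simpa [dist_eq_norm] using hrw.trans (infDist_le_dist_of_mem (left_mem_segment ℝ u v))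
  have hrv : r ≤ ‖w - v‖ := by
    simpa [dist_eq_norm] using hrw.trans (infDist_le_dist_of_mem (right_mem_segment ℝ u v))
  have htri : ‖v - u‖ ≤ ‖w - u‖ + ‖w - v‖ := by
    simpa [norm_sub_rev v w, add_comm] using norm_sub_le_norm_sub_add_norm_sub v w u
  set a := ‖w - u‖
  set b := ‖w - v‖
  set L := ‖v - u‖
  have hs : 0 < a + b := by linarith
  have hmain : ((a + b) * r) ^ 2 ≤ a * b * ((a + b) ^ 2 - L ^ 2) := by
    rw [← norm_smul_sub_add_smul_sub_sq]
    gcongr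
    exact (mul_le_mul_of_nonneg_left hrw hs.le).trans (mul_infDist_segment_le u v w hs)
  have hL : 0 ≤ (a + b) ^ 2 - L ^ 2 := by nlinarith [norm_nonneg (v - u)]
  have hab : 4 * (a * b) ≤ (a + b) ^ 2 := by nlinarith [sq_nonneg (a - b)]
  have : (a + b) ^ 2 * (4 * r ^ 2) ≤ (a + b) ^ 2 * ((a + b) ^ 2 - L ^ 2) := by
    nlinarith [mul_le_mul_of_nonneg_right hab hL]
  nlinarith [le_of_mul_le_mul_left this (by positivity)]

end InnerProductSpace

theorem rpow_one_div_mul_rpow_le_sq {α r : ℝ} (hα : 0 < α) (hr0 : 0 < r) (hr1 : r ≤ 1) :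
    r ^ (1 / α) * r ^ α ≤ r ^ 2 := by
  have hexp : (2 : ℝ) ≤ 1 / α + α := by
    rw [div_add' _ _ _ hα.ne', le_div_iff₀ hα]
    nlinarith [sq_nonneg (α - 1)]
  rw [← Real.rpow_add hr0, ← Real.rpow_two]
  exact Real.rpow_le_rpow_of_exponent_ge hr0 hr1 hexp

theorem rpow_div_le_sub_of_sq_add_four_mul_sq_le {α c r s L : ℝ} (hα : 1 < α)
    (hr0 : 0 < r) (hr1 : r < 1) (hL0 : 0 ≤ L) (hLc : L ≤ c * r ^ (1 / α)) (hs : 0 ≤ s)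
    (hsum : L ^ 2 + 4 * r ^ 2 ≤ s ^ 2) :
    r ^ α / (3 * max c 1) ≤ s - L := by
  have hrα : 0 < r ^ α := Real.rpow_pos_of_pos hr0 α
  have hmax : 1 ≤ max c 1 := le_max_right c 1
  have hLs : L ≤ s := by nlinarith
  rcases le_or_gt (2 * L) s with hcase | hcase
  · have hrαr : r ^ α ≤ r := by
      simpa using Real.rpow_le_rpow_of_exponent_ge hr0 hr1.le hα.le
    have hrs : 2 * r ≤ s := by nlinarith
    calc r ^ α / (3 * max c 1) ≤ r ^ α := div_le_self hrα.le (by linarith)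
      _ ≤ s - L := by linarith
  · have hLpos : 0 < L := by linarith
    have hc : 0 < c := by
      have := Real.rpow_pos_of_pos hr0 (1 / α)
      by_contra! hc
      nlinarith
    have hsq : 4 * r ^ 2 ≤ 3 * L * (s - L) := by nlinarith
    have hLrα : L * r ^ α ≤ c * r ^ 2 := by
      calc L * r ^ α ≤ c * r ^ (1 / α) * r ^ α := by gcongr
        _ ≤ c * r ^ 2 := by
          rw [mul_assoc]
          exact mul_le_mul_of_nonneg_left
            (rpow_one_div_mul_rpow_le_sq (by linarith) hr0 hr1.le) hc.le
    have hkey : r ^ α ≤ 3 * c * (s - L) := by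
      refine le_of_mul_le_mul_left ?_ hLpos
      nlinarith
    rw [div_le_iff₀ (by positivity)]
    calc r ^ α ≤ 3 * c * (s - L) := hkey
      _ ≤ (s - L) * (3 * max c 1) := by nlinarith [le_max_left c 1]

theorem stmt7_general {d : ℕ} (D : Set (EuclideanSpace ℝ (Fin d)))
    (h : EuclideanSpace ℝ (Fin d) → ℝ)
    (m₁ m₂ : ℝ) (hm₁ : 0 < m₁)
    (hh : ∀ x ∈ D, m₁ ≤ h x ∧ h x ≤ m₂)
    (f : EuclideanSpace ℝ (Fin d) → EuclideanSpace ℝ (Fin d) → ℝ)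
    (hf : ∀ x w, f x w = h x * ‖w‖)
    (α : ℝ) (hα : 1 < α) (c : ℝ) (η : ℝ) :
    ∃ C > 0, ∀ x ∈ D, ∀ u v w : EuclideanSpace ℝ (Fin d), ∀ r : ℝ, 0 < r → r < 1 →
      ‖u - w‖ < η → ‖v - w‖ < η → ‖u - v‖ < η →
      r ≤ Metric.infDist w (segment ℝ u v) →
      ‖u - v‖ ≤ c * r ^ (1 / α) →
      f x (v - u) + C * r ^ α ≤ f x (w - u) + f x (v - w) := by
  refine ⟨m₁ / (3 * max c 1), by positivity, ?_⟩
  intro x hx u v w r hr0 hr1 _ _ _ hrw hLc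
  have hgap := rpow_div_le_sub_of_sq_add_four_mul_sq_le hα hr0 hr1 (norm_nonneg _)
    (by rwa [norm_sub_rev] at hLc) (by positivity) (sq_norm_sub_add_four_mul_sq_le hr0 hrw)
  have hgap0 : 0 ≤ ‖w - u‖ + ‖w - v‖ - ‖v - u‖ := (by positivity : (0 : ℝ) ≤ _).trans hgap
  rw [hf, hf, hf, norm_sub_rev v w, mul_comm_div]
  nlinarith [mul_le_mul_of_nonneg_left hgap hm₁.le, mul_le_mul_of_nonneg_right (hh x hx).1 hgap0]

theorem stmt7 {d : ℕ} (D : Set (EuclideanSpace ℝ (Fin d)))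
    (h : EuclideanSpace ℝ (Fin d) → ℝ) (hcont : Continuous h)
    (m₁ m₂ : ℝ) (hm₁ : 0 < m₁)
    (hh : ∀ x ∈ D, m₁ ≤ h x ∧ h x ≤ m₂)
    (f : EuclideanSpace ℝ (Fin d) → EuclideanSpace ℝ (Fin d) → ℝ)
    (hf : ∀ x w, f x w = h x * ‖w‖)
    (α : ℝ) (hα : 1 < α) (c : ℝ) (hc : 0 < c) (η : ℝ) (hη0 : 0 < η) (hη : η < 1) :
    ∃ C > 0, ∀ x ∈ D, ∀ u v w : EuclideanSpace ℝ (Fin d), ∀ r : ℝ, 0 < r → r < 1 →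
      ‖u - w‖ < η → ‖v - w‖ < η → ‖u - v‖ < η →
      r ≤ Metric.infDist w (segment ℝ u v) →
      ‖u - v‖ ≤ c * r ^ (1 / α) →
      f x (v - u) + C * r ^ α ≤ f x (w - u) + f x (v - w) :=
  stmt7_general D h m₁ m₂ hm₁ hh f hf α hα c η
end

section
/- Let f : D × ℝ^d → [0,∞) satisfy: (Lip) |f(x,v) − f(y,v)| ≤ C|x−y||v| for all x,y ∈ D, v ∈ ℝ^d; (Hilb) for each x, the straight line minimizes ∫₀¹ f(x, γ'(t)) dt among Lipschitz paths in D from a to b, with infimum f(x, b−a); and the ellipticity m₁|v| ≤ f(x,v) ≤ m₂|v|. Then for a, b ∈ D with |b−a| ≤ 1, |d_f(a,b) − f(a, b−a)| ≤ c₁|b−a|², where c₁ = C(m₂/m₁)² and d_f(a,b) is the infimal cost over Lipschitz paths in D from a to b. -/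
/-!
By (Lip), freezing the kernel at the starting point `a` changes the cost of a path by at most
`C R L`, where `R` bounds the distance of the path from `a` and `L` is its length. For the
segment, `R = L = |b - a|` and the frozen cost is `f(a, b - a)`, which gives the upper bound.
For the lower bound only paths of cost below `m₂ |b - a|` matter; by ellipticity their length,
and hence their distance from `a`, is at most `(m₂ / m₁) |b - a|`, while by (Hilb) their frozen
cost is at least `f(a, b - a)`.
-/

open MeasureTheory Set

/-- The infimal `f`-cost over Lipschitz paths in `D` joining `u` to `v`. -/
noncomputable def dfCost {d : ℕ} (D : Set (EuclideanSpace ℝ (Fin d)))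
    (f : EuclideanSpace ℝ (Fin d) → EuclideanSpace ℝ (Fin d) → ℝ)
    (u v : EuclideanSpace ℝ (Fin d)) : ℝ :=
  sInf {c : ℝ | ∃ γ : ℝ → EuclideanSpace ℝ (Fin d),
    (∃ K : NNReal, LipschitzWith K γ) ∧ (∀ t ∈ Icc (0:ℝ) 1, γ t ∈ D) ∧
    γ 0 = u ∧ γ 1 = v ∧ c = ∫ t in (0:ℝ)..1, f (γ t) (deriv γ t)}

section Paths

variable {E : Type*} [NormedAddCommGroup E] [NormedSpace ℝ E]

section LipschitzPath

variable {K : NNReal} {γ : ℝ → E}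

theorem LipschitzWith.intervalIntegrable_deriv [CompleteSpace E] (hγ : LipschitzWith K γ)
    (s t : ℝ) : IntervalIntegrable (deriv γ) volume s t :=
  (intervalIntegrable_const (c := (K : ℝ))).mono_fun' (aestronglyMeasurable_deriv γ _)
    (Filter.Eventually.of_forall fun _ => norm_deriv_le_of_lipschitz hγ)

theorem LipschitzWith.norm_sub_le_integral_norm_deriv [FiniteDimensional ℝ E]
    (hγ : LipschitzWith K γ) {s t : ℝ} (hst : s ≤ t) :
    ‖γ t - γ s‖ ≤ ∫ u in s..t, ‖deriv γ u‖ := by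
  obtain ⟨ℓ, hℓ, hℓv⟩ : ∃ ℓ : StrongDual ℝ E, ‖ℓ‖ ≤ 1 ∧ ℓ (γ t - γ s) = ‖γ t - γ s‖ :=
    exists_dual_vector'' ℝ _
  -- the fundamental theorem of calculus is available for the real Lipschitz function `ℓ ∘ γ`
  have hftc : ∫ u in s..t, deriv (ℓ ∘ γ) u = ℓ (γ t) - ℓ (γ s) :=
    (ℓ.lipschitz.comp hγ).lipschitzOnWith.absolutelyContinuousOnInterval.integral_deriv_eq_sub
  have hderiv : ∀ᵐ u, u ∈ uIoc s t → deriv (ℓ ∘ γ) u = ℓ (deriv γ u) := by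
    filter_upwards [hγ.ae_differentiableAt_real] with u hu _
    exact (ℓ.hasFDerivAt.comp_hasDerivAt u hu.hasDerivAt).deriv
  calc ‖γ t - γ s‖ = ∫ u in s..t, ℓ (deriv γ u) := by
        rw [← hℓv, map_sub, ← hftc]; exact intervalIntegral.integral_congr_ae hderiv
    _ = ℓ (∫ u in s..t, deriv γ u) := ℓ.intervalIntegral_comp_comm (hγ.intervalIntegrable_deriv s t)
    _ ≤ ‖∫ u in s..t, deriv γ u‖ := by
        simpa using (Real.le_norm_self _).trans (ℓ.le_of_opNorm_le hℓ _)
    _ ≤ ∫ u in s..t, ‖deriv γ u‖ := intervalIntegral.norm_integral_le_integral_norm hst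

end LipschitzPath

structure IsAdmissiblePath (D : Set E) (γ : ℝ → E) (u v : E) : Prop where
  lipschitzWith : ∃ K : NNReal, LipschitzWith K γ
  mapsTo : MapsTo γ (Icc 0 1) D
  map_zero : γ 0 = u
  map_one : γ 1 = v

noncomputable def pathCost (f : E → E → ℝ) (γ : ℝ → E) : ℝ :=
  ∫ t in (0:ℝ)..1, f (γ t) (deriv γ t)

noncomputable def pathLength (γ : ℝ → E) : ℝ :=
  ∫ t in (0:ℝ)..1, ‖deriv γ t‖

theorem pathLength_nonneg (γ : ℝ → E) : 0 ≤ pathLength γ :=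
  intervalIntegral.integral_nonneg zero_le_one fun _ _ => norm_nonneg _

namespace IsAdmissiblePath

variable {D : Set E} {γ : ℝ → E} {u v : E} {f : E → E → ℝ}

theorem intervalIntegrable_norm_deriv [CompleteSpace E] (hγ : IsAdmissiblePath D γ u v) :
    IntervalIntegrable (fun t => ‖deriv γ t‖) volume 0 1 :=
  let ⟨_, hK⟩ := hγ.lipschitzWith
  (hK.intervalIntegrable_deriv 0 1).norm

theorem intervalIntegrable_cost [CompleteSpace E] {M : ℝ} (hγ : IsAdmissiblePath D γ u v)
    (hf : Continuous fun q : E × E => f q.1 q.2) (hM : ∀ x ∈ D, ∀ w, |f x w| ≤ M * ‖w‖) :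
    IntervalIntegrable (fun t => f (γ t) (deriv γ t)) volume 0 1 := by
  obtain ⟨K, hK⟩ := hγ.lipschitzWith
  refine (hγ.intervalIntegrable_norm_deriv.const_mul M).mono_fun'
    (hf.comp_aestronglyMeasurable
      (hK.continuous.aestronglyMeasurable.prodMk (aestronglyMeasurable_deriv γ _))) ?_
  rw [uIoc_of_le zero_le_one, Filter.EventuallyLE, ae_restrict_iff' measurableSet_Ioc]
  exact Filter.Eventually.of_forall fun t ht => hM _ (hγ.mapsTo (Ioc_subset_Icc_self ht)) _

theorem norm_sub_le_pathLength [FiniteDimensional ℝ E] (hγ : IsAdmissiblePath D γ u v)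
    {t : ℝ} (ht : t ∈ Icc (0:ℝ) 1) : ‖γ t - u‖ ≤ pathLength γ := by
  obtain ⟨K, hK⟩ := hγ.lipschitzWith
  calc ‖γ t - u‖ = ‖γ t - γ 0‖ := by rw [hγ.map_zero]
    _ ≤ ∫ s in (0:ℝ)..t, ‖deriv γ s‖ := hK.norm_sub_le_integral_norm_deriv ht.1
    _ ≤ pathLength γ :=
      intervalIntegral.integral_mono_interval le_rfl ht.1 ht.2
        (Filter.Eventually.of_forall fun _ => norm_nonneg _) hγ.intervalIntegrable_norm_deriv

theorem mul_pathLength_le_pathCost [CompleteSpace E] {m₁ M : ℝ} (hγ : IsAdmissiblePath D γ u v)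
    (hf : Continuous fun q : E × E => f q.1 q.2) (hM : ∀ x ∈ D, ∀ w, |f x w| ≤ M * ‖w‖)
    (hm₁ : ∀ x ∈ D, ∀ w, m₁ * ‖w‖ ≤ f x w) : m₁ * pathLength γ ≤ pathCost f γ := by
  rw [pathLength, ← intervalIntegral.integral_const_mul]
  exact intervalIntegral.integral_mono_on zero_le_one
    (hγ.intervalIntegrable_norm_deriv.const_mul m₁) (hγ.intervalIntegrable_cost hf hM)
    fun t ht => hm₁ _ (hγ.mapsTo ht) _

theorem abs_pathCost_sub_pathCost_frozen_le [CompleteSpace E] {a : E} {M C R : ℝ}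
    (hγ : IsAdmissiblePath D γ u v) (ha : a ∈ D)
    (hf : Continuous fun q : E × E => f q.1 q.2) (hM : ∀ x ∈ D, ∀ w, |f x w| ≤ M * ‖w‖)
    (hLip : ∀ x ∈ D, ∀ y ∈ D, ∀ w, |f x w - f y w| ≤ C * ‖x - y‖ * ‖w‖)
    (hR : ∀ t ∈ Icc (0:ℝ) 1, ‖γ t - a‖ ≤ R) (hC : 0 ≤ C) :
    |pathCost f γ - pathCost (fun _ w => f a w) γ| ≤ C * R * pathLength γ := by
  have hfi := hγ.intervalIntegrable_cost hf hM
  have hfai := hγ.intervalIntegrable_cost (f := fun _ w => f a w)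
    (hf.comp (continuous_const.prodMk continuous_snd)) fun _ _ => hM a ha
  rw [pathCost, pathCost, pathLength, ← intervalIntegral.integral_sub hfi hfai,
    ← intervalIntegral.integral_const_mul]
  refine (intervalIntegral.abs_integral_le_integral_abs zero_le_one).trans
    (intervalIntegral.integral_mono_on zero_le_one (hfi.sub hfai).abs
      (hγ.intervalIntegrable_norm_deriv.const_mul _) fun t ht => ?_)
  calc |f (γ t) (deriv γ t) - f a (deriv γ t)|
      ≤ C * ‖γ t - a‖ * ‖deriv γ t‖ := hLip _ (hγ.mapsTo ht) a ha _
    _ ≤ C * R * ‖deriv γ t‖ := by gcongr; exact hR t ht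

theorem sub_le_pathCost [FiniteDimensional ℝ E] {a b : E} {m₁ m₂ C : ℝ}
    (hγ : IsAdmissiblePath D γ a b) (ha : a ∈ D) (hm₁ : 0 < m₁) (hC : 0 ≤ C)
    (hf : Continuous fun q : E × E => f q.1 q.2)
    (hm₁f : ∀ x ∈ D, ∀ w, m₁ * ‖w‖ ≤ f x w) (hM : ∀ x ∈ D, ∀ w, |f x w| ≤ m₂ * ‖w‖)
    (hLip : ∀ x ∈ D, ∀ y ∈ D, ∀ w, |f x w - f y w| ≤ C * ‖x - y‖ * ‖w‖)
    (hfrozen : f a (b - a) ≤ pathCost (fun _ w => f a w) γ) :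
    f a (b - a) - C * (m₂ / m₁) ^ 2 * ‖b - a‖ ^ 2 ≤ pathCost f γ := by
  by_cases hcheap : m₂ * ‖b - a‖ ≤ pathCost f γ
  · have := (abs_le.1 (hM a ha (b - a))).2
    have : 0 ≤ C * (m₂ / m₁) ^ 2 * ‖b - a‖ ^ 2 := by positivity
    linarith
  set L := pathLength γ
  have hL : L ≤ m₂ / m₁ * ‖b - a‖ := by
    have := hγ.mul_pathLength_le_pathCost hf hM hm₁f
    rw [div_mul_eq_mul_div, le_div_iff₀ hm₁]
    linarith
  have hfreeze := abs_le.1 <| hγ.abs_pathCost_sub_pathCost_frozen_le ha hf hM hLip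
    (fun t ht => hγ.norm_sub_le_pathLength ht) hC
  have : C * L * L ≤ C * (m₂ / m₁) ^ 2 * ‖b - a‖ ^ 2 := by
    have hR : 0 ≤ m₂ / m₁ * ‖b - a‖ := (pathLength_nonneg γ).trans hL
    calc C * L * L ≤ C * (m₂ / m₁ * ‖b - a‖) * (m₂ / m₁ * ‖b - a‖) := by
          gcongr
          exact pathLength_nonneg γ
      _ = C * (m₂ / m₁) ^ 2 * ‖b - a‖ ^ 2 := by ring
  linarith

end IsAdmissiblePath

section Segment

variable {D : Set E} {u v : E}

theorem isAdmissiblePath_lineMap (hD : Convex ℝ D) (hu : u ∈ D) (hv : v ∈ D) :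
    IsAdmissiblePath D (AffineMap.lineMap u v) u v where
  lipschitzWith := ⟨_, lipschitzWith_lineMap u v⟩
  mapsTo _ ht := hD.lineMap_mem hu hv ht
  map_zero := AffineMap.lineMap_apply_zero u v
  map_one := AffineMap.lineMap_apply_one u v

theorem pathLength_lineMap (u v : E) : pathLength (AffineMap.lineMap u v) = ‖v - u‖ := by
  simp [pathLength]

theorem pathCost_const_lineMap (g : E → ℝ) (u v : E) :
    pathCost (fun _ => g) (AffineMap.lineMap u v) = g (v - u) := by
  simp [pathCost]

theorem norm_lineMap_sub_left_le {t : ℝ} (ht : t ∈ Icc (0:ℝ) 1) :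
    ‖AffineMap.lineMap u v t - u‖ ≤ ‖v - u‖ := by
  rw [← dist_eq_norm, dist_lineMap_left, Real.norm_of_nonneg ht.1, dist_eq_norm']
  exact mul_le_of_le_one_left (norm_nonneg _) ht.2

end Segment

end Paths

section InfimalCost

variable {d : ℕ} {D : Set (EuclideanSpace ℝ (Fin d))}
  {f : EuclideanSpace ℝ (Fin d) → EuclideanSpace ℝ (Fin d) → ℝ}
  {γ : ℝ → EuclideanSpace ℝ (Fin d)} {u v : EuclideanSpace ℝ (Fin d)}

theorem dfCost_le_pathCost (hf₀ : ∀ x ∈ D, ∀ w, 0 ≤ f x w) (hγ : IsAdmissiblePath D γ u v) :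
    dfCost D f u v ≤ pathCost f γ := by
  refine csInf_le ⟨0, ?_⟩ ⟨γ, hγ.1, hγ.2, hγ.3, hγ.4, rfl⟩
  rintro _ ⟨γ, -, hγD, -, -, rfl⟩
  exact intervalIntegral.integral_nonneg zero_le_one fun t ht => hf₀ _ (hγD t ht) _

theorem le_dfCost {c : ℝ} (hne : ∃ γ, IsAdmissiblePath D γ u v)
    (h : ∀ γ, IsAdmissiblePath D γ u v → c ≤ pathCost f γ) : c ≤ dfCost D f u v := by
  obtain ⟨γ, hγ⟩ := hne
  refine le_csInf ⟨_, γ, hγ.1, hγ.2, hγ.3, hγ.4, rfl⟩ ?_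
  rintro _ ⟨γ, hK, hγD, h₀, h₁, rfl⟩
  exact h γ ⟨hK, hγD, h₀, h₁⟩

theorem dfCost_le_add_sq {a b : EuclideanSpace ℝ (Fin d)} {M C : ℝ} (hD : Convex ℝ D)
    (ha : a ∈ D) (hb : b ∈ D) (hC : 0 ≤ C) (hf : Continuous fun q : _ × _ => f q.1 q.2)
    (hf₀ : ∀ x ∈ D, ∀ w, 0 ≤ f x w) (hM : ∀ x ∈ D, ∀ w, |f x w| ≤ M * ‖w‖)
    (hLip : ∀ x ∈ D, ∀ y ∈ D, ∀ w, |f x w - f y w| ≤ C * ‖x - y‖ * ‖w‖) :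
    dfCost D f a b ≤ f a (b - a) + C * ‖b - a‖ ^ 2 := by
  have hσ := isAdmissiblePath_lineMap hD ha hb
  have hfreeze := abs_le.1 <| hσ.abs_pathCost_sub_pathCost_frozen_le ha hf hM hLip
    (fun _ => norm_lineMap_sub_left_le) hC
  rw [pathCost_const_lineMap, pathLength_lineMap] at hfreeze
  have := dfCost_le_pathCost hf₀ hσ
  linarith

end InfimalCost

theorem stmt9_general {d : ℕ} (D : Set (EuclideanSpace ℝ (Fin d)))
    (hDconv : Convex ℝ D)
    (f : EuclideanSpace ℝ (Fin d) → EuclideanSpace ℝ (Fin d) → ℝ)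
    (hf : Continuous fun q : EuclideanSpace ℝ (Fin d) × EuclideanSpace ℝ (Fin d) => f q.1 q.2)
    (m₁ m₂ C : ℝ) (hm₁ : 0 < m₁) (hC : 0 < C)
    -- ellipticity (p = 1):
    (hbound : ∀ x ∈ D, ∀ w : EuclideanSpace ℝ (Fin d),
      m₁ * ‖w‖ ≤ f x w ∧ f x w ≤ m₂ * ‖w‖)
    -- (Lip):
    (hLip : ∀ x ∈ D, ∀ y ∈ D, ∀ w : EuclideanSpace ℝ (Fin d),
      |f x w - f y w| ≤ C * ‖x - y‖ * ‖w‖)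
    -- (Hilb): for the frozen kernel `f x (·)`, straight lines are geodesics, with
    -- infimal cost `f x (v - u)`:
    (hHilb : ∀ x ∈ D, ∀ u ∈ D, ∀ v ∈ D,
      dfCost D (fun _ w => f x w) u v = f x (v - u)) :
    ∀ a ∈ D, ∀ b ∈ D, ‖b - a‖ ≤ 1 →
      |dfCost D f a b - f a (b - a)| ≤ C * (m₂ / m₁) ^ 2 * ‖b - a‖ ^ 2 := by
  intro a ha b hb _
  have hf₀ : ∀ x ∈ D, ∀ w, 0 ≤ f x w := fun x hx w =>
    (by positivity : 0 ≤ m₁ * ‖w‖).trans (hbound x hx w).1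
  have hM : ∀ x ∈ D, ∀ w, |f x w| ≤ m₂ * ‖w‖ := fun x hx w =>
    abs_le.2 ⟨by linarith [hf₀ x hx w, (hbound x hx w).2, norm_nonneg w], (hbound x hx w).2⟩
  have hupper := dfCost_le_add_sq hDconv ha hb hC.le hf hf₀ hM hLip
  have hlower : f a (b - a) - C * (m₂ / m₁) ^ 2 * ‖b - a‖ ^ 2 ≤ dfCost D f a b :=
    le_dfCost ⟨_, isAdmissiblePath_lineMap hDconv ha hb⟩ fun γ hγ =>
      hγ.sub_le_pathCost ha hm₁ hC.le hf (fun x hx w => (hbound x hx w).1) hM hLip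
        (hHilb a ha a ha b hb ▸ dfCost_le_pathCost (fun _ _ w => hf₀ a ha w) hγ)
  -- `m₁ |b - a| ≤ f(a, b - a) ≤ m₂ |b - a|`, so `m₂ / m₁ ≥ 1` unless `b = a`
  have hratio : ‖b - a‖ ^ 2 ≤ (m₂ / m₁) ^ 2 * ‖b - a‖ ^ 2 := by
    have hba := hbound a ha (b - a)
    have := pow_le_pow_left₀ (by positivity) (hba.1.trans hba.2) 2
    rw [div_pow, div_mul_eq_mul_div, le_div_iff₀ (by positivity)]
    linarith
  have := mul_le_mul_of_nonneg_left hratio hC.le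
  rw [abs_le]
  constructor <;> linarith

theorem stmt9 {d : ℕ} (hd : 2 ≤ d) (D : Set (EuclideanSpace ℝ (Fin d)))
    (hDcl : IsClosed D) (hDb : Bornology.IsBounded D) (hDconv : Convex ℝ D)
    (f : EuclideanSpace ℝ (Fin d) → EuclideanSpace ℝ (Fin d) → ℝ)
    (hf : Continuous fun q : EuclideanSpace ℝ (Fin d) × EuclideanSpace ℝ (Fin d) => f q.1 q.2)
    (m₁ m₂ C : ℝ) (hm₁ : 0 < m₁) (hm₂ : 0 < m₂) (hC : 0 < C)
    -- ellipticity (p = 1):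
    (hbound : ∀ x ∈ D, ∀ w : EuclideanSpace ℝ (Fin d),
      m₁ * ‖w‖ ≤ f x w ∧ f x w ≤ m₂ * ‖w‖)
    -- (Lip):
    (hLip : ∀ x ∈ D, ∀ y ∈ D, ∀ w : EuclideanSpace ℝ (Fin d),
      |f x w - f y w| ≤ C * ‖x - y‖ * ‖w‖)
    -- (Hilb): for the frozen kernel `f x (·)`, straight lines are geodesics, with
    -- infimal cost `f x (v - u)`:
    (hHilb : ∀ x ∈ D, ∀ u ∈ D, ∀ v ∈ D,
      dfCost D (fun _ w => f x w) u v = f x (v - u)) :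
    ∀ a ∈ D, ∀ b ∈ D, ‖b - a‖ ≤ 1 →
      |dfCost D f a b - f a (b - a)| ≤ C * (m₂ / m₁) ^ 2 * ‖b - a‖ ^ 2 :=
  stmt9_general D hDconv f hf m₁ m₂ C hm₁ hC hbound hLip hHilb
end

section
/- Let D ⊂ ℝ^d be closed bounded convex, {X_i} ⊂ D, and R_n = sup_{y∈D} min_{1≤i≤n}|X_i − y|. Fix n and suppose 3R_n < ε_n. Then any two points v₁, v₂ ∈ {X_1,…,X_n} ∪ {a,b} are connected by a path in the ε_n-graph G_n(a,b) on vertex set {X_1,…,X_n} ∪ {a,b}, where u ~ v iff 0 < |u−v| < ε_n. -/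
/-!
Walk from `u` towards `v` along the segment, which stays in `D` by convexity. The point at
distance `ε / 2` from `u` has a sample within `R`; since `2 * R < ε`, that sample is a neighbour of
`u` (or `u` itself) and is at least `ε / 2 - R` closer to `v`. Repeating this finitely often brings
us within `ε` of `v`.
-/

open Set

def proximityGraph (α : Type*) [PseudoMetricSpace α] (ε : ℝ) : SimpleGraph α where
  Adj u v := u ≠ v ∧ dist u v < ε
  symm.symm u v h := ⟨h.1.symm, dist_comm u v ▸ h.2⟩
  loopless.irrefl _ h := h.1 rfl

namespace proximityGraph

variable {α : Type*} [PseudoMetricSpace α] {ε : ℝ}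

theorem reachable_of_dist_lt {u v : α} (h : dist u v < ε) :
    (proximityGraph α ε).Reachable u v := by
  obtain rfl | huv := eq_or_ne u v
  · rfl
  · exact SimpleGraph.Adj.reachable ⟨huv, h⟩

theorem preconnected_of_forall_exists_closer {δ : ℝ} (hδ : 0 < δ)
    (hstep : ∀ u v : α, ε ≤ dist u v → ∃ x, dist u x < ε ∧ dist x v ≤ dist u v - δ) :
    (proximityGraph α ε).Preconnected := by
  have hreach : ∀ m : ℕ, ∀ u v : α, dist u v < ε + m * δ →
      (proximityGraph α ε).Reachable u v := by
    intro m
    induction m with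
    | zero => simpa using fun u v => reachable_of_dist_lt
    | succ m ih =>
      intro u v huv
      by_cases hnear : dist u v < ε + m * δ
      · exact ih u v hnear
      have hmδ : 0 ≤ m * δ := mul_nonneg m.cast_nonneg hδ.le
      obtain ⟨x, hux, hxv⟩ := hstep u v (by linarith)
      push_cast at huv
      exact (reachable_of_dist_lt hux).trans (ih x v (by linarith))
  intro u v
  obtain ⟨m, hm⟩ := exists_nat_gt ((dist u v - ε) / δ)
  rw [div_lt_iff₀ hδ] at hm
  exact hreach m u v (by linarith)

end proximityGraph

theorem SimpleGraph.Reachable.exists_fin_adj {V : Type*} {G : SimpleGraph V} {u v : V}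
    (h : G.Reachable u v) :
    ∃ (k : ℕ) (w : Fin (k + 1) → V), w 0 = u ∧ w (Fin.last k) = v ∧
      ∀ j : Fin k, G.Adj (w j.castSucc) (w j.succ) := by
  obtain ⟨p⟩ := h
  exact ⟨p.length, fun j => p.getVert j, p.getVert_zero, p.getVert_length,
    fun j => p.adj_getVert_succ j.isLt⟩

section Convex

variable {E : Type*} [NormedAddCommGroup E] [NormedSpace ℝ E]

theorem exists_mem_segment_dist_eq {u v : E} {s : ℝ} (hs : 0 ≤ s) (hsd : s ≤ dist u v) :
    ∃ p ∈ segment ℝ u v, dist u p = s ∧ dist p v = dist u v - s := by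
  set t := s / dist u v
  have ht : t * dist u v = s := div_mul_cancel_of_imp fun h => le_antisymm (h ▸ hsd) hs
  have ht0 : 0 ≤ t := div_nonneg hs dist_nonneg
  have ht1 : t ≤ 1 := div_le_one_of_le₀ hsd dist_nonneg
  refine ⟨AffineMap.lineMap u v t, lineMap_mem_segment ℝ u v ⟨ht0, ht1⟩, ?_, ?_⟩
  · rw [dist_left_lineMap, Real.norm_of_nonneg ht0, ht]
  · rw [dist_lineMap_right, Real.norm_of_nonneg (by linarith), sub_mul, one_mul, ht]

variable {D V : Set E} {R ε : ℝ}

theorem exists_closer_of_convex (hD : Convex ℝ D) (hVD : V ⊆ D)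
    (hcover : ∀ y ∈ D, ∃ x ∈ V, dist x y ≤ R) (hR : 0 ≤ R) (hRε : 2 * R < ε)
    (u v : V) (huv : ε ≤ dist u v) :
    ∃ x : V, dist u x < ε ∧ dist x v ≤ dist u v - (ε / 2 - R) := by
  obtain ⟨p, hp, hup, hpv⟩ := exists_mem_segment_dist_eq (u := (u : E)) (v := v) (s := ε / 2)
    (by linarith) (by rw [← Subtype.dist_eq]; linarith)
  obtain ⟨x, hxV, hxp⟩ := hcover p (hD.segment_subset (hVD u.2) (hVD v.2) hp)
  refine ⟨⟨x, hxV⟩, ?_, ?_⟩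
  · exact (dist_triangle_right (u : E) x p).trans_lt (by linarith)
  · rw [Subtype.dist_eq, Subtype.dist_eq]
    linarith [dist_triangle x p v]

theorem proximityGraph.preconnected_of_convex (hD : Convex ℝ D) (hVD : V ⊆ D)
    (hcover : ∀ y ∈ D, ∃ x ∈ V, dist x y ≤ R) (hR : 0 ≤ R) (hRε : 2 * R < ε) :
    (proximityGraph V ε).Preconnected :=
  preconnected_of_forall_exists_closer (by linarith)
    (exists_closer_of_convex hD hVD hcover hR hRε)

end Convex

theorem stmt14_general {d : ℕ} (D : Set (EuclideanSpace ℝ (Fin d)))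
    (hDconv : Convex ℝ D)
    (n : ℕ) (X : Fin n → EuclideanSpace ℝ (Fin d)) (hX : ∀ i, X i ∈ D)
    (a b : EuclideanSpace ℝ (Fin d)) (ha : a ∈ D) (hb : b ∈ D)
    (R ε : ℝ)
    -- `R` dominates the covering radius `R_n = sup_{y ∈ D} min_i |X_i - y|`:
    (hcover : ∀ y ∈ D, ∃ i : Fin n, dist (X i) y ≤ R)
    (hRε : 3 * R < ε) :
    ∀ v₁ ∈ insert a (insert b (range X)), ∀ v₂ ∈ insert a (insert b (range X)),
      ∃ (k : ℕ) (w : Fin (k + 1) → EuclideanSpace ℝ (Fin d)),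
        w 0 = v₁ ∧ w (Fin.last k) = v₂ ∧
        (∀ j, w j ∈ insert a (insert b (range X))) ∧
        (∀ j : Fin k, 0 < ‖w j.succ - w j.castSucc‖ ∧ ‖w j.succ - w j.castSucc‖ < ε) := by
  set V := insert a (insert b (range X))
  have hVD : V ⊆ D := insert_subset ha (insert_subset hb (range_subset_iff.2 hX))
  have hcoverV : ∀ y ∈ D, ∃ x ∈ V, dist x y ≤ R := fun y hy =>
    let ⟨i, hi⟩ := hcover y hy
    ⟨X i, subset_insert _ _ (subset_insert _ _ (mem_range_self i)), hi⟩
  have hR : 0 ≤ R := let ⟨_, hi⟩ := hcover a ha; dist_nonneg.trans hi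
  have hconn := proximityGraph.preconnected_of_convex hDconv hVD hcoverV hR (by linarith)
  intro v₁ hv₁ v₂ hv₂
  obtain ⟨k, w, hw0, hwk, hadj⟩ := (hconn ⟨v₁, hv₁⟩ ⟨v₂, hv₂⟩).exists_fin_adj
  refine ⟨k, fun j => w j, congrArg Subtype.val hw0, congrArg Subtype.val hwk,
    fun j => (w j).2, fun j => ?_⟩
  obtain ⟨hne, hlt⟩ := (hadj j).symm
  rw [← dist_eq_norm, ← Subtype.dist_eq]
  exact ⟨dist_pos.2 hne, hlt⟩

theorem stmt14 {d : ℕ} (D : Set (EuclideanSpace ℝ (Fin d)))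
    (hDcl : IsClosed D) (hDb : Bornology.IsBounded D) (hDconv : Convex ℝ D)
    (n : ℕ) (X : Fin n → EuclideanSpace ℝ (Fin d)) (hX : ∀ i, X i ∈ D)
    (a b : EuclideanSpace ℝ (Fin d)) (ha : a ∈ D) (hb : b ∈ D)
    (R ε : ℝ) (hR0 : 0 ≤ R)
    -- `R` dominates the covering radius `R_n = sup_{y ∈ D} min_i |X_i - y|`:
    (hcover : ∀ y ∈ D, ∃ i : Fin n, dist (X i) y ≤ R)
    (hRε : 3 * R < ε) :
    ∀ v₁ ∈ insert a (insert b (range X)), ∀ v₂ ∈ insert a (insert b (range X)),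
      ∃ (k : ℕ) (w : Fin (k + 1) → EuclideanSpace ℝ (Fin d)),
        w 0 = v₁ ∧ w (Fin.last k) = v₂ ∧
        (∀ j, w j ∈ insert a (insert b (range X))) ∧
        (∀ j : Fin k, 0 < ‖w j.succ - w j.castSucc‖ ∧ ‖w j.succ - w j.castSucc‖ < ε) :=
  stmt14_general D hDconv n X hX a b ha hb R ε hcover hRε
end

section
/- Suppose f satisfies the Lipschitz condition |f(x,v) − f(y,v)| ≤ c|x−y||v|^p and homogeneity f(x,λv) = λ^p f(x,v) for λ > 0, with p ≥ 1. For any path v = (v_0,…,v_m) with |v_{i+1} − v_i| ≤ ε for all i, letting L(v) = m^{p−1} Σ_{i=0}^{m−1} ∫₀¹ f(v_i + t(v_{i+1}−v_i), v_{i+1}−v_i) dt and H(v) = (1/m) Σ_{i=0}^{m−1} f(v_i, m(v_{i+1}−v_i)), one has |L(v) − H(v)| ≤ c ε m^{p−1} Σ_{i=0}^{m−1} |v_{i+1}−v_i|^p. If moreover m₁|v|^p ≤ f(x,v), then |L(v) − H(v)| ≤ (c/m₁) ε min(L(v), H(v)). -/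
/-! Along a segment of step `w` the integrand `f (x + t • w) w` differs from its value at the
left endpoint by at most `c ‖w‖ ‖w‖ ^ p`, by (Lip); after the `p`-homogeneous rescaling, which
turns `H` into `m ^ (p - 1) ∑ f (v i) (Δ i)`, summing these errors gives the first bound. The
lower bound `m₁ ‖w‖ ^ p ≤ f x w` bounds both `L` and `H` below by `m₁ m ^ (p - 1) ∑ ‖Δ i‖ ^ p`,
which turns the first bound into the second. -/

open MeasureTheory Set

section SegmentCost

variable {E : Type*} [NormedAddCommGroup E] [NormedSpace ℝ E] {f : E → E → ℝ} {c p : ℝ}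

noncomputable def segmentCost (f : E → E → ℝ) (x w : E) : ℝ :=
  ∫ t in (0 : ℝ)..1, f (x + t • w) w

theorem continuous_apply_add_smul_of_lipschitz
    (hLip : ∀ x y w : E, |f x w - f y w| ≤ c * ‖x - y‖ * ‖w‖ ^ p) (x w : E) :
    Continuous fun t : ℝ => f (x + t • w) w := by
  refine (LipschitzWith.of_dist_le' (K := c * ‖w‖ * ‖w‖ ^ p) fun s t => ?_).continuous
  have h := hLip (x + s • w) (x + t • w) w
  rwa [show x + s • w - (x + t • w) = (s - t) • w by module, norm_smul, Real.norm_eq_abs,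
    ← Real.dist_eq, ← Real.dist_eq, show c * (dist s t * ‖w‖) * ‖w‖ ^ p
      = c * ‖w‖ * ‖w‖ ^ p * dist s t by ring] at h

theorem abs_segmentCost_sub_le (hc : 0 ≤ c)
    (hLip : ∀ x y w : E, |f x w - f y w| ≤ c * ‖x - y‖ * ‖w‖ ^ p) (x w : E) :
    |segmentCost f x w - f x w| ≤ c * ‖w‖ * ‖w‖ ^ p := by
  have hsub : segmentCost f x w - f x w = ∫ t in (0 : ℝ)..1, (f (x + t • w) w - f x w) := by
    rw [intervalIntegral.integral_sub
      ((continuous_apply_add_smul_of_lipschitz hLip x w).intervalIntegrable 0 1)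
      intervalIntegrable_const]
    simp [segmentCost]
  have hpoint : ∀ t ∈ uIoc (0 : ℝ) 1, ‖f (x + t • w) w - f x w‖ ≤ c * ‖w‖ * ‖w‖ ^ p := by
    intro t ht
    rw [uIoc_of_le zero_le_one] at ht
    have h := hLip (x + t • w) x w
    rw [add_sub_cancel_left, norm_smul, Real.norm_eq_abs, abs_of_pos ht.1] at h
    calc ‖f (x + t • w) w - f x w‖ ≤ c * (t * ‖w‖) * ‖w‖ ^ p := h
      _ ≤ c * (1 * ‖w‖) * ‖w‖ ^ p := by gcongr; exact ht.2
      _ = c * ‖w‖ * ‖w‖ ^ p := by ring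
  simpa [hsub] using intervalIntegral.norm_integral_le_of_norm_le_const hpoint

theorem le_segmentCost {m₁ : ℝ}
    (hLip : ∀ x y w : E, |f x w - f y w| ≤ c * ‖x - y‖ * ‖w‖ ^ p)
    (hlower : ∀ x w : E, m₁ * ‖w‖ ^ p ≤ f x w) (x w : E) :
    m₁ * ‖w‖ ^ p ≤ segmentCost f x w := by
  have h := intervalIntegral.integral_mono_on (μ := volume) zero_le_one intervalIntegrable_const
    ((continuous_apply_add_smul_of_lipschitz hLip x w).intervalIntegrable 0 1)
    fun t _ => hlower (x + t • w) w
  simpa [segmentCost] using h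

theorem one_div_mul_sum_smul_eq_of_homogeneous {ι : Type*} (s : Finset ι)
    (hhom : ∀ x (w : E) (lam : ℝ), 0 < lam → f x (lam • w) = lam ^ p * f x w)
    {n : ℝ} (hn : 0 < n) (x w : ι → E) :
    1 / n * ∑ i ∈ s, f (x i) (n • w i) = n ^ (p - 1) * ∑ i ∈ s, f (x i) (w i) := by
  simp only [hhom _ _ _ hn, ← Finset.mul_sum, Real.rpow_sub hn, Real.rpow_one]
  field_simp

end SegmentCost

theorem abs_mul_sum_sub_mul_sum_le {ι : Type*} (s : Finset ι) {M K : ℝ} (hM : 0 ≤ M)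
    {a b w : ι → ℝ} (h : ∀ i ∈ s, |a i - b i| ≤ K * w i) :
    |M * ∑ i ∈ s, a i - M * ∑ i ∈ s, b i| ≤ K * M * ∑ i ∈ s, w i := by
  rw [← mul_sub, ← Finset.sum_sub_distrib, abs_mul, abs_of_nonneg hM]
  calc M * |∑ i ∈ s, (a i - b i)| ≤ M * ∑ i ∈ s, K * w i := by
        gcongr
        exact (Finset.abs_sum_le_sum_abs _ _).trans (Finset.sum_le_sum h)
    _ = K * M * ∑ i ∈ s, w i := by rw [← Finset.mul_sum]; ring

theorem mul_mul_sum_le_mul_sum {ι : Type*} (s : Finset ι) {M m₁ : ℝ} (hM : 0 ≤ M)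
    {a w : ι → ℝ} (h : ∀ i ∈ s, m₁ * w i ≤ a i) :
    m₁ * (M * ∑ i ∈ s, w i) ≤ M * ∑ i ∈ s, a i := by
  rw [mul_left_comm, Finset.mul_sum]
  gcongr with i hi
  exact h i hi

theorem abs_sub_le_div_mul_min {L H K S m₁ : ℝ} (hm₁ : 0 < m₁) (hK : 0 ≤ K)
    (hLH : |L - H| ≤ K * S) (hL : m₁ * S ≤ L) (hH : m₁ * S ≤ H) :
    |L - H| ≤ K / m₁ * min L H :=
  calc |L - H| ≤ K * S := hLH
    _ = K / m₁ * (m₁ * S) := by field_simp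
    _ ≤ K / m₁ * min L H := by gcongr; exact le_min hL hH

theorem stmt15_general {d : ℕ}
    (f : EuclideanSpace ℝ (Fin d) → EuclideanSpace ℝ (Fin d) → ℝ)
    (p : ℝ)
    -- (Lip):
    (c : ℝ) (hc : 0 < c)
    (hLip : ∀ x y (w : EuclideanSpace ℝ (Fin d)),
      |f x w - f y w| ≤ c * ‖x - y‖ * ‖w‖ ^ p)
    -- p-homogeneity:
    (hhom : ∀ x (w : EuclideanSpace ℝ (Fin d)) (lam : ℝ), 0 < lam →
      f x (lam • w) = lam ^ p * f x w)
    (m₁ : ℝ) (hm₁ : 0 < m₁)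
    (hlower : ∀ x w : EuclideanSpace ℝ (Fin d), m₁ * ‖w‖ ^ p ≤ f x w)
    (ε : ℝ) (hε : 0 < ε)
    (m : ℕ) (hm : 1 ≤ m) (v : Fin (m + 1) → EuclideanSpace ℝ (Fin d))
    (hstep : ∀ i : Fin m, ‖v i.succ - v i.castSucc‖ ≤ ε)
    (L H : ℝ)
    (hL : L = (m : ℝ) ^ (p - 1) * ∑ i : Fin m,
      ∫ t in (0:ℝ)..1, f (v i.castSucc + t • (v i.succ - v i.castSucc)) (v i.succ - v i.castSucc))
    (hH : H = (1 / (m : ℝ)) * ∑ i : Fin m, f (v i.castSucc) ((m : ℝ) • (v i.succ - v i.castSucc))) :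
    |L - H| ≤ c * ε * (m : ℝ) ^ (p - 1) * ∑ i : Fin m, ‖v i.succ - v i.castSucc‖ ^ p ∧
    |L - H| ≤ (c / m₁) * ε * min L H := by
  set Δ : Fin m → EuclideanSpace ℝ (Fin d) := fun i => v i.succ - v i.castSucc
  have hm0 : (0 : ℝ) < m := by exact_mod_cast hm
  have hM : (0 : ℝ) ≤ (m : ℝ) ^ (p - 1) := by positivity
  have hL' : L = (m : ℝ) ^ (p - 1) * ∑ i, segmentCost f (v i.castSucc) (Δ i) := hL
  have hH' : H = (m : ℝ) ^ (p - 1) * ∑ i, f (v i.castSucc) (Δ i) :=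
    hH.trans (one_div_mul_sum_smul_eq_of_homogeneous _ hhom hm0 _ _)
  have hsegment : ∀ i ∈ Finset.univ,
      |segmentCost f (v i.castSucc) (Δ i) - f (v i.castSucc) (Δ i)| ≤ c * ε * ‖Δ i‖ ^ p :=
    fun i _ => (abs_segmentCost_sub_le hc.le hLip _ _).trans (by gcongr; exact hstep i)
  have hbound : |L - H| ≤ c * ε * (m : ℝ) ^ (p - 1) * ∑ i, ‖Δ i‖ ^ p := by
    rw [hL', hH']
    exact abs_mul_sum_sub_mul_sum_le _ hM hsegment
  have hLlow : m₁ * ((m : ℝ) ^ (p - 1) * ∑ i, ‖Δ i‖ ^ p) ≤ L := by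
    rw [hL']
    exact mul_mul_sum_le_mul_sum _ hM fun i _ => le_segmentCost hLip hlower _ _
  have hHlow : m₁ * ((m : ℝ) ^ (p - 1) * ∑ i, ‖Δ i‖ ^ p) ≤ H := by
    rw [hH']
    exact mul_mul_sum_le_mul_sum _ hM fun i _ => hlower _ _
  refine ⟨hbound, ?_⟩
  rw [mul_assoc] at hbound
  rw [← mul_div_right_comm]
  exact abs_sub_le_div_mul_min hm₁ (by positivity) hbound hLlow hHlow

theorem stmt15 {d : ℕ}
    (f : EuclideanSpace ℝ (Fin d) → EuclideanSpace ℝ (Fin d) → ℝ)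
    (p : ℝ) (hp : 1 ≤ p)
    -- (Lip):
    (c : ℝ) (hc : 0 < c)
    (hLip : ∀ x y (w : EuclideanSpace ℝ (Fin d)),
      |f x w - f y w| ≤ c * ‖x - y‖ * ‖w‖ ^ p)
    -- p-homogeneity:
    (hhom : ∀ x (w : EuclideanSpace ℝ (Fin d)) (lam : ℝ), 0 < lam →
      f x (lam • w) = lam ^ p * f x w)
    (m₁ : ℝ) (hm₁ : 0 < m₁)
    (hlower : ∀ x w : EuclideanSpace ℝ (Fin d), m₁ * ‖w‖ ^ p ≤ f x w)
    (ε : ℝ) (hε : 0 < ε)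
    (m : ℕ) (hm : 1 ≤ m) (v : Fin (m + 1) → EuclideanSpace ℝ (Fin d))
    (hstep : ∀ i : Fin m, ‖v i.succ - v i.castSucc‖ ≤ ε)
    (L H : ℝ)
    (hL : L = (m : ℝ) ^ (p - 1) * ∑ i : Fin m,
      ∫ t in (0:ℝ)..1, f (v i.castSucc + t • (v i.succ - v i.castSucc)) (v i.succ - v i.castSucc))
    (hH : H = (1 / (m : ℝ)) * ∑ i : Fin m, f (v i.castSucc) ((m : ℝ) • (v i.succ - v i.castSucc))) :
    |L - H| ≤ c * ε * (m : ℝ) ^ (p - 1) * ∑ i : Fin m, ‖v i.succ - v i.castSucc‖ ^ p ∧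
    |L - H| ≤ (c / m₁) * ε * min L H :=
  stmt15_general f p c hc hLip hhom m₁ hm₁ hlower ε hε m hm v hstep L H hL hH
end
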